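/- Let α, β, δ, γ be linear maps on real sequences such that the matrix operator T(ω,x) = (αω + βx, δω + γx) is bounded on Z₂. Then the quasilinear maps KP∘δ and δ∘KP from ℓ² to ℓ² are trivial: there exist linear maps L₁ and L₂ from ℓ² to real sequences and a constant C′ > 0 such that for every y ∈ ℓ², δy ∈ ℓ², KP(δy) − L₁y ∈ ℓ², δ(KP y) − L₂y ∈ ℓ², ‖KP(δy) − L₁y‖₂ ≤ C′‖y‖₂, and ‖δ(KP y) − L₂y‖₂ ≤ C′‖y‖₂. -/

import Mathlib

open scoped BigOperators

noncomputable section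

/-- Real sequences. -/
abbrev RSeq : Type := ℕ → ℝ

/-- Membership in ℓ². -/
def memL2 (x : RSeq) : Prop := Summable (fun n => (x n) ^ 2)

/-- The ℓ² norm. -/
noncomputable def l2norm (x : RSeq) : ℝ := Real.sqrt (∑' n, (x n) ^ 2)

/-- The Kalton–Peck map, defined coordinatewise.  (In Lean, `Real.log 0 = 0` and
division by zero is zero, so the conventions `0·log 0 = 0` and `KP 0 = 0` hold.) -/
noncomputable def KP (x : RSeq) : RSeq := fun n => 2 * x n * Real.log (|x n| / l2norm x)

/-- Membership in the Kalton–Peck space Z₂. -/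
def memZ2 (u : RSeq × RSeq) : Prop := memL2 u.2 ∧ memL2 (u.1 - KP u.2)

/-- The Z₂ quasinorm. -/
noncomputable def Z2norm (u : RSeq × RSeq) : ℝ := l2norm (u.1 - KP u.2) + l2norm u.2

/-- A map on pairs of sequences is bounded on Z₂. -/
def BoundedOnZ2 (T : RSeq × RSeq → RSeq × RSeq) : Prop :=
  (∀ u, memZ2 u → memZ2 (T u)) ∧ ∃ C : ℝ, ∀ u, memZ2 u → Z2norm (T u) ≤ C * Z2norm u

/-- The matrix operator associated to four linear maps on sequences. -/
def matOp (α β δ γ : RSeq →ₗ[ℝ] RSeq) : RSeq × RSeq → RSeq × RSeq :=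
  fun u => (α u.1 + β u.2, δ u.1 + γ u.2)

/-- Membership in the Orlicz space ℓ_f = Dom KP. -/
def memLf (x : RSeq) : Prop := memL2 x ∧ memL2 (KP x)

/-- The ℓ_f quasinorm. -/
noncomputable def lfNorm (x : RSeq) : ℝ := l2norm (KP x) + l2norm x

/-- Membership in ℓ_f* = Ran KP. -/
def memLfStar (ω : RSeq) : Prop := ∃ x : RSeq, memL2 x ∧ memL2 (ω - KP x)

/-- The ℓ_f* quasinorm. -/
noncomputable def lfStarNorm (ω : RSeq) : ℝ :=
  sInf {r : ℝ | ∃ x : RSeq, memL2 x ∧ memL2 (ω - KP x) ∧ r = l2norm (ω - KP x) + l2norm x}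

/-- A bounded map on Z₂ is strictly singular if every linear subspace of Z₂ on which it is
bounded below is finite dimensional. -/
def StrictlySingular (T : RSeq × RSeq → RSeq × RSeq) : Prop :=
  ∀ V : Submodule ℝ (RSeq × RSeq), (∀ v ∈ V, memZ2 v) →
    (∃ c > 0, ∀ v ∈ V, c * Z2norm v ≤ Z2norm (T v)) → FiniteDimensional ℝ V

/-- A set of sequences is totally bounded (relatively compact) for the ℓ² norm. -/
def l2TotallyBounded (A : Set RSeq) : Prop :=
  ∀ ε > 0, ∃ S : Set RSeq, S.Finite ∧
    ∀ a ∈ A, ∃ s ∈ S, memL2 (a - s) ∧ l2norm (a - s) < ε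

/-- A map on Z₂ is compact if the image of the unit ball is totally bounded for the
Z₂ quasinorm. -/
def CompactOnZ2 (T : RSeq × RSeq → RSeq × RSeq) : Prop :=
  ∀ ε > 0, ∃ S : Set (RSeq × RSeq), S.Finite ∧
    ∀ u, memZ2 u → Z2norm u ≤ 1 → ∃ s ∈ S, memZ2 (T u - s) ∧ Z2norm (T u - s) < ε

/-!
Test the boundedness of `T` on the two elements `(y, 0)` and `(KP y, y)` of Z₂, both of
quasinorm `‖y‖₂`. The first is sent to `(α y, δ y)`, so `α y - KP (δ y) ∈ ℓ²` with norm
`≲ ‖y‖₂`: `KP ∘ δ` is trivialised by `α`. The second is sent to a pair whose second coordinate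
is `δ (KP y) + γ y`, so `δ ∘ KP` is trivialised by `-γ`.
-/

lemma memL2_zero : memL2 (0 : RSeq) := by
  simp [memL2]

lemma KP_zero : KP (0 : RSeq) = 0 := by
  funext n; simp [KP]

lemma l2norm_zero : l2norm (0 : RSeq) = 0 := by
  simp [l2norm]

lemma l2norm_nonneg (x : RSeq) : 0 ≤ l2norm x := Real.sqrt_nonneg _

lemma memL2_sub_comm {x y : RSeq} (h : memL2 (x - y)) : memL2 (y - x) := by
  simpa only [memL2, Pi.sub_apply, sub_sq_comm] using h

lemma l2norm_sub_comm (x y : RSeq) : l2norm (x - y) = l2norm (y - x) := by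
  simp only [l2norm, Pi.sub_apply, sub_sq_comm]

lemma Z2norm_nonneg (u : RSeq × RSeq) : 0 ≤ Z2norm u :=
  add_nonneg (l2norm_nonneg _) (l2norm_nonneg _)

lemma l2norm_fst_sub_KP_le_Z2norm (u : RSeq × RSeq) : l2norm (u.1 - KP u.2) ≤ Z2norm u :=
  le_add_of_nonneg_right (l2norm_nonneg _)

lemma l2norm_snd_le_Z2norm (u : RSeq × RSeq) : l2norm u.2 ≤ Z2norm u :=
  le_add_of_nonneg_left (l2norm_nonneg _)

lemma memZ2_inl {y : RSeq} (hy : memL2 y) : memZ2 (y, 0) :=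
  ⟨memL2_zero, by simpa only [KP_zero, sub_zero] using hy⟩

lemma Z2norm_inl (y : RSeq) : Z2norm (y, 0) = l2norm y := by
  simp [Z2norm, KP_zero, l2norm_zero]

lemma memZ2_KP_graph {y : RSeq} (hy : memL2 y) : memZ2 (KP y, y) :=
  ⟨hy, by simpa only [sub_self] using memL2_zero⟩

lemma Z2norm_KP_graph (y : RSeq) : Z2norm (KP y, y) = l2norm y := by
  simp [Z2norm, l2norm_zero]

lemma matOp_inl (α β δ γ : RSeq →ₗ[ℝ] RSeq) (y : RSeq) :
    matOp α β δ γ (y, 0) = (α y, δ y) := by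
  simp [matOp]

lemma BoundedOnZ2.exists_pos_bound {T : RSeq × RSeq → RSeq × RSeq} (hT : BoundedOnZ2 T) :
    ∃ C > 0, ∀ u, memZ2 u → Z2norm (T u) ≤ C * Z2norm u := by
  obtain ⟨-, C, hC⟩ := hT
  refine ⟨max C 1, by positivity, fun u hu => (hC u hu).trans ?_⟩
  exact mul_le_mul_of_nonneg_right (le_max_left C 1) (Z2norm_nonneg u)

/-- If the matrix operator is bounded on Z₂, then the quasilinear maps
KP∘δ and δ∘KP from ℓ² to ℓ² are trivial. -/
theorem stmt_8 (α β δ γ : RSeq →ₗ[ℝ] RSeq)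
    (hT : BoundedOnZ2 (matOp α β δ γ)) :
    ∃ (L₁ L₂ : RSeq →ₗ[ℝ] RSeq) (C : ℝ), 0 < C ∧
      ∀ y : RSeq, memL2 y →
        memL2 (δ y) ∧
        memL2 (KP (δ y) - L₁ y) ∧ memL2 (δ (KP y) - L₂ y) ∧
        l2norm (KP (δ y) - L₁ y) ≤ C * l2norm y ∧
        l2norm (δ (KP y) - L₂ y) ≤ C * l2norm y := by
  obtain ⟨C, hC0, hC⟩ := hT.exists_pos_bound
  refine ⟨α, -γ, C, hC0, fun y hy => ?_⟩
  have hmem_inl := hT.1 _ (memZ2_inl hy)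
  have hnorm_inl := hC _ (memZ2_inl hy)
  have hmem_graph := hT.1 _ (memZ2_KP_graph hy)
  have hnorm_graph := hC _ (memZ2_KP_graph hy)
  rw [matOp_inl] at hmem_inl hnorm_inl
  rw [Z2norm_inl] at hnorm_inl
  rw [Z2norm_KP_graph] at hnorm_graph
  have hδKP : δ (KP y) - (-γ) y = (matOp α β δ γ (KP y, y)).2 := by
    simp [matOp, sub_eq_add_neg]
  rw [hδKP]
  refine ⟨hmem_inl.1, memL2_sub_comm hmem_inl.2, hmem_graph.1, ?_, ?_⟩
  · rw [l2norm_sub_comm]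
    exact (l2norm_fst_sub_KP_le_Z2norm _).trans hnorm_inl
  · exact (l2norm_snd_le_Z2norm _).trans hnorm_graph
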